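/- Let H be an n×n real positive semidefinite symmetric matrix, let A be an m×n real matrix with full column rank (rank A = n), and let s, y ∈ ℝ^m have all components strictly positive. Let S and Y denote the m×m diagonal matrices with diagonal entries s_i and y_i respectively, and let I be the m×m identity matrix. Then the (n+2m)×(n+2m) block matrix [[H, 0, Aᵀ], [A, I, 0], [0, Y, S]] is nonsingular. -/

import Mathlib

/-!
Eliminating the last two block rows reduces the system to its Schur complement with respect to
the invertible block `[[I, 0], [Y, S]]`, namely `H + Aᵀ S⁻¹ Y A`: the determinant factors as
`det S · det (H + Aᵀ S⁻¹ Y A)`. Since `S⁻¹ Y` is a positive diagonal matrix and `A` is injective,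
`Aᵀ S⁻¹ Y A` is positive definite, so adding the positive semidefinite `H` keeps it so.
-/

open Matrix

lemma mulVec_injective_of_rank_eq_card {K m n : Type*} [Field K] [Fintype n]
    {A : Matrix m n K} (hA : A.rank = Fintype.card n) : Function.Injective A.mulVec := by
  have hker := LinearMap.finrank_range_add_finrank_ker A.mulVecLin
  rw [← rank, hA, Module.finrank_fintype_fun_eq_card, add_eq_left,
    Submodule.finrank_eq_zero, LinearMap.ker_eq_bot] at hker
  exact hker

section

variable {K : Type*} [Field K] {m n : Type*} [Fintype m] [DecidableEq m]

lemma mul_fromBlocks_one_zero_diagonal_eq_one {y s : m → K} (hs : ∀ i, s i ≠ 0) :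
    fromBlocks (1 : Matrix m m K) 0 (-diagonal (y / s)) (diagonal s⁻¹) *
      fromBlocks 1 0 (diagonal y) (diagonal s) = 1 := by
  rw [fromBlocks_multiply, diagonal_mul_diagonal, diagonal_mul_diagonal, ← fromBlocks_one]
  congr 1 <;> simp [hs, div_eq_mul_inv, mul_comm]

lemma det_fromBlocks_fromCols_fromRows_fromBlocks_diagonal [Fintype n] [DecidableEq n]
    (H : Matrix n n K) (A : Matrix m n K) {y s : m → K} (hs : ∀ i, s i ≠ 0) :
    (fromBlocks H (fromCols 0 Aᵀ) (fromRows A 0)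
        (fromBlocks (1 : Matrix m m K) 0 (diagonal y) (diagonal s))).det
      = (∏ i, s i) * (H + Aᵀ * diagonal (y / s) * A).det := by
  have hinv := mul_fromBlocks_one_zero_diagonal_eq_one (y := y) hs
  let _ := invertibleOfLeftInverse _ _ hinv
  rw [det_fromBlocks₂₂, det_fromBlocks_zero₁₂, det_one, one_mul, det_diagonal, sub_eq_add_neg]
  congr 2
  simp only [invOf_eq_left_inv hinv, fromCols_mul_fromBlocks, fromCols_mul_fromRows,
    Matrix.zero_mul, zero_add, Matrix.mul_zero, add_zero, Matrix.mul_neg, Matrix.neg_mul, neg_neg]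

end

lemma posDef_add_transpose_mul_diagonal_mul {m n : Type*} [Fintype m] [Fintype n] [DecidableEq m]
    {H : Matrix n n ℝ} (hH : H.PosSemidef) {A : Matrix m n ℝ} (hA : Function.Injective A.mulVec)
    {d : m → ℝ} (hd : ∀ i, 0 < d i) : (H + Aᵀ * diagonal d * A).PosDef :=
  PosDef.posSemidef_add hH <| by
    simpa using (PosDef.diagonal hd).conjTranspose_mul_mul_same hA

/-- If `H ⪰ 0` is symmetric, `A` has full column rank, and `s, y > 0`
    componentwise, then the block matrix `[[H, 0, Aᵀ], [A, I, 0], [0, Y, S]]`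
    (with `S = diagonal s`, `Y = diagonal y`) is nonsingular. -/
theorem newtonSystem_nonsingular {n m : ℕ}
    (H : Matrix (Fin n) (Fin n) ℝ)
    (A : Matrix (Fin m) (Fin n) ℝ)
    (s y : Fin m → ℝ)
    (hH : H.PosSemidef) (hA : A.rank = n)
    (hs : ∀ i, 0 < s i) (hy : ∀ i, 0 < y i) :
    (Matrix.fromBlocks
        H (Matrix.fromCols (0 : Matrix (Fin n) (Fin m) ℝ) Aᵀ)
        (Matrix.fromRows A (0 : Matrix (Fin m) (Fin n) ℝ))
        (Matrix.fromBlocks (1 : Matrix (Fin m) (Fin m) ℝ) (0 : Matrix (Fin m) (Fin m) ℝ)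
          (Matrix.diagonal y) (Matrix.diagonal s))).det ≠ 0 := by
  have hAinj : Function.Injective A.mulVec :=
    mulVec_injective_of_rank_eq_card (by rw [hA, Fintype.card_fin])
  have hreduced := posDef_add_transpose_mul_diagonal_mul hH hAinj fun i => div_pos (hy i) (hs i)
  rw [det_fromBlocks_fromCols_fromRows_fromBlocks_diagonal H A fun i => (hs i).ne']
  exact mul_ne_zero (Finset.prod_ne_zero_iff.mpr fun i _ => (hs i).ne') hreduced.det_pos.ne'
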